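/- If θ = θ₁ - θ₂ = 0 at an equilibrium of the vortex dipole polar system with r₁, r₂ ∈ (0,1) and r₁ ≠ 0 ≠ r₂, a contradiction arises: the first equilibrium equation forces r₁ > r₂ while the second forces r₂ > r₁. Hence no equilibrium has θ = 0. -/
import Mathlib

/-- if `θ = θ₁-θ₂ = 0` at an equilibrium of the vortex dipole polar
system with `r₁, r₂ ∈ (0,1)` (separation `r₁₂ = |r₁-r₂| ≠ 0`), a contradiction
arises: the first equilibrium equation forces `r₁ > r₂` while the second forces
`r₂ > r₁`. Hence no equilibrium has `θ = 0`. -/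
theorem no_equilibrium_theta_zero
    (Ω₀ Φ : ℝ) (hΩ₀ : 0 < Ω₀) (hΦ : 0 < Φ)
    (r₁ r₂ : ℝ)
    (hr₁ : 0 < r₁) (hr₁' : r₁ < 1) (hr₂ : 0 < r₂) (hr₂' : r₂ < 1)
    (r₁₂sq : ℝ) (hr₁₂sq : r₁₂sq = (r₁ - r₂) ^ 2) (hpos : 0 < r₁₂sq)
    (heq1 : Ω₀ / (1 - r₁ ^ 2) = (Φ / (2 * r₁₂sq)) * (1 - r₂ / r₁))
    (heq2 : Ω₀ / (1 - r₂ ^ 2) = (Φ / (2 * r₁₂sq)) * (1 - r₁ / r₂)) :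
    False := by
  have hc : 0 < Φ / (2 * r₁₂sq) := div_pos hΦ (by linarith)
  have h1 : 0 < Ω₀ / (1 - r₁ ^ 2) := div_pos hΩ₀ (by nlinarith)
  have h2 : 0 < Ω₀ / (1 - r₂ ^ 2) := div_pos hΩ₀ (by nlinarith)
  rw [heq1] at h1
  rw [heq2] at h2
  have hA : 0 < 1 - r₂ / r₁ := (mul_pos_iff.mp h1).elim (fun h => h.2)
    (fun h => absurd h.1 (not_lt.mpr hc.le))
  have hB : 0 < 1 - r₁ / r₂ := (mul_pos_iff.mp h2).elim (fun h => h.2)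
    (fun h => absurd h.1 (not_lt.mpr hc.le))
  have hA' : r₂ < r₁ := by
    have := (div_lt_one hr₁).mp (by linarith)
    linarith
  have hB' : r₁ < r₂ := by
    have := (div_lt_one hr₂).mp (by linarith)
    linarith
  linarith
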